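/- If G is a connected finite simple graph with at least two vertices, then b_dR(G) ≤ Δ(G) + δ(G) − 1, where δ(G) and Δ(G) denote the minimum and maximum degree of G. -/

import Mathlib

/-- A double Roman dominating function (DRDF) on a graph `G`: a function
`f : V → ℕ` taking values in `{0,1,2,3}` such that every vertex assigned `0`
has a neighbor assigned `3` or two distinct neighbors assigned `2`, and every
vertex assigned `1` has a neighbor assigned at least `2`. -/
def IsDRDF {V : Type*} (G : SimpleGraph V) (f : V → ℕ) : Prop :=
  (∀ v, f v ≤ 3) ∧
  (∀ v, f v = 0 →
    (∃ w, G.Adj v w ∧ f w = 3) ∨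
    (∃ w₁ w₂, G.Adj v w₁ ∧ G.Adj v w₂ ∧ w₁ ≠ w₂ ∧ f w₁ = 2 ∧ f w₂ = 2)) ∧
  (∀ v, f v = 1 → ∃ w, G.Adj v w ∧ 2 ≤ f w)

/-- The double Roman domination number `γ_dR(G)`: the minimum weight of a DRDF on `G`. -/
noncomputable def gammaDR {V : Type*} [Fintype V] (G : SimpleGraph V) : ℕ :=
  sInf {k | ∃ f : V → ℕ, IsDRDF G f ∧ ∑ v, f v = k}

/-- The double Roman bondage number `b_dR(G)`: the minimum cardinality of a set
`B` of edges of `G` such that `γ_dR(G - B) > γ_dR(G)`. -/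
noncomputable def bDR {V : Type*} [Fintype V] (G : SimpleGraph V) : ℕ :=
  sInf {k | ∃ B : Finset (Sym2 V), ↑B ⊆ G.edgeSet ∧ B.card = k ∧
    gammaDR G < gammaDR (G.deleteEdges ↑B)}

/-!
Take a vertex `v` of minimum degree and a neighbour `u` of it, and delete the
`deg v + deg u - 1 ≤ δ + Δ - 1` edges at `u` or `v`. Both become isolated, so every DRDF of
the new graph puts at least `2` on each of them. Moving to `3` on `u` and `0` on `v` gives a
DRDF of `G` of smaller weight, so `γ_dR` strictly increases.
-/

open Finset Function SimpleGraph

namespace IsDRDF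

variable {V : Type*} {G H : SimpleGraph V} {f : V → ℕ}

lemma two_le_of_isolated (hf : IsDRDF G f) {v : V} (hv : ∀ w, ¬G.Adj v w) : 2 ≤ f v := by
  obtain ⟨-, hf0, hf1⟩ := hf
  by_contra! h
  obtain h0 | h1 : f v = 0 ∨ f v = 1 := by omega
  · rcases hf0 v h0 with ⟨w, hw, -⟩ | ⟨w, -, hw, -⟩ <;> exact hv w hw
  · obtain ⟨w, hw, -⟩ := hf1 v h1
    exact hv w hw

/-- Since no edge of `H` touches `u` or `v`, the conditions at every other vertex only see
values of `f` that are left unchanged. -/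
lemma update_of_isolated [DecidableEq V] (hHG : H ≤ G) (hf : IsDRDF H f) {u v : V}
    (hvu : G.Adj v u) (hu : ∀ w, ¬H.Adj u w) (hv : ∀ w, ¬H.Adj v w) :
    IsDRDF G (update (update f v 0) u 3) := by
  set g := update (update f v 0) u 3
  have hgu : g u = 3 := update_self ..
  have hgv : g v = 0 := by simp [g, hvu.ne]
  have hg : ∀ x, x ≠ u → x ≠ v → g x = f x := fun x hxu hxv => by simp [g, hxu, hxv]
  have hgH : ∀ x w, H.Adj x w → g w = f w := fun x w hxw =>
    hg w (by rintro rfl; exact hu x hxw.symm) (by rintro rfl; exact hv x hxw.symm)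
  obtain ⟨hf3, hf0, hf1⟩ := hf
  refine ⟨fun x => ?_, fun x hx => ?_, fun x hx => ?_⟩
  · by_cases hxu : x = u
    · simp [hxu, hgu]
    by_cases hxv : x = v
    · simp [hxv, hgv]
    rw [hg x hxu hxv]
    exact hf3 x
  · by_cases hxu : x = u
    · simp [hxu, hgu] at hx
    by_cases hxv : x = v
    · exact .inl ⟨u, hxv ▸ hvu, hgu⟩
    rw [hg x hxu hxv] at hx
    rcases hf0 x hx with ⟨w, hw, hw3⟩ | ⟨w₁, w₂, hw₁, hw₂, hne, h₁, h₂⟩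
    · exact .inl ⟨w, hHG hw, hgH x w hw ▸ hw3⟩
    · exact .inr ⟨w₁, w₂, hHG hw₁, hHG hw₂, hne, hgH x w₁ hw₁ ▸ h₁, hgH x w₂ hw₂ ▸ h₂⟩
  · by_cases hxu : x = u
    · simp [hxu, hgu] at hx
    by_cases hxv : x = v
    · simp [hxv, hgv] at hx
    rw [hg x hxu hxv] at hx
    obtain ⟨w, hw, hw2⟩ := hf1 x hx
    exact ⟨w, hHG hw, hgH x w hw ▸ hw2⟩

end IsDRDF

section

variable {V : Type*}

lemma not_adj_deleteEdges_incidenceSet_union {G : SimpleGraph V} {v : V} (s : Set (Sym2 V))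
    (w : V) : ¬(G.deleteEdges (G.incidenceSet v ∪ s)).Adj v w := by
  rw [deleteEdges_adj]
  exact fun ⟨hvw, hnot⟩ => hnot (.inl ((G.mem_incidenceSet v w).2 hvw))

variable [Fintype V]

lemma sum_update_add_apply {M : Type*} [AddCommMonoid M] [DecidableEq V] (f : V → M) (i : V)
    (b : M) : ∑ x, update f i b x + f i = ∑ x, f x + b := by
  rw [sum_update_of_mem (mem_univ i), ← sum_erase_add _ _ (mem_univ i), sdiff_singleton_eq_erase]
  abel

lemma gammaDR_le {G : SimpleGraph V} {f : V → ℕ} (hf : IsDRDF G f) : gammaDR G ≤ ∑ x, f x :=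
  Nat.sInf_le ⟨f, hf, rfl⟩

lemma exists_isDRDF_sum_eq_gammaDR (G : SimpleGraph V) :
    ∃ f : V → ℕ, IsDRDF G f ∧ ∑ x, f x = gammaDR G := by
  have hne : {k | ∃ f : V → ℕ, IsDRDF G f ∧ ∑ x, f x = k}.Nonempty :=
    ⟨_, fun _ => 3, ⟨fun _ => le_rfl, by simp, by simp⟩, rfl⟩
  exact Nat.sInf_mem hne

lemma bDR_le_card {G : SimpleGraph V} {B : Finset (Sym2 V)} (hB : ↑B ⊆ G.edgeSet)
    (hlt : gammaDR G < gammaDR (G.deleteEdges ↑B)) : bDR G ≤ #B :=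
  Nat.sInf_le ⟨B, hB, rfl, hlt⟩

lemma gammaDR_lt_of_isolated {G H : SimpleGraph V} (hHG : H ≤ G) {u v : V} (hvu : G.Adj v u)
    (hu : ∀ w, ¬H.Adj u w) (hv : ∀ w, ¬H.Adj v w) : gammaDR G < gammaDR H := by
  classical
  obtain ⟨f, hf, hfsum⟩ := exists_isDRDF_sum_eq_gammaDR H
  have hfu := hf.two_le_of_isolated hu
  have hfv := hf.two_le_of_isolated hv
  have hweight_u := sum_update_add_apply (update f v 0) u 3
  have hweight_v := sum_update_add_apply f v 0
  rw [update_of_ne hvu.ne.symm] at hweight_u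
  have := gammaDR_le (hf.update_of_isolated hHG hvu hu hv)
  omega

lemma bDR_add_one_le_degree_add_degree {G : SimpleGraph V} [DecidableRel G.Adj] {u v : V}
    (hvu : G.Adj v u) : bDR G + 1 ≤ G.degree v + G.degree u := by
  classical
  set B := G.incidenceFinset v ∪ G.incidenceFinset u
  have hBcoe : (B : Set (Sym2 V)) = G.incidenceSet v ∪ G.incidenceSet u := by
    simp only [B, coe_union, coe_incidenceFinset]
  have hinter : G.incidenceFinset v ∩ G.incidenceFinset u = {s(v, u)} := by
    apply coe_injective
    rw [coe_inter, coe_incidenceFinset, coe_incidenceFinset, coe_singleton]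
    exact G.incidenceSet_inter_incidenceSet_of_adj hvu
  have hcard : #B + 1 = G.degree v + G.degree u := by
    rw [← card_incidenceFinset_eq_degree, ← card_incidenceFinset_eq_degree, ← card_singleton s(v, u),
      ← hinter, card_union_add_card_inter]
  have hlt : gammaDR G < gammaDR (G.deleteEdges ↑B) := by
    rw [hBcoe]
    refine gammaDR_lt_of_isolated (deleteEdges_le _) hvu (fun w => ?_)
      (not_adj_deleteEdges_incidenceSet_union _)
    rw [Set.union_comm]
    exact not_adj_deleteEdges_incidenceSet_union _ w
  have hsub : ↑B ⊆ G.edgeSet :=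
    hBcoe ▸ Set.union_subset (G.incidenceSet_subset v) (G.incidenceSet_subset u)
  have := bDR_le_card hsub hlt
  omega

end

/-- If `G` is a connected graph with at least two vertices, then
`b_dR(G) ≤ Δ(G) + δ(G) − 1`. -/
theorem bDR_le_maxDegree_add_minDegree {V : Type*} [Fintype V]
    (G : SimpleGraph V) [DecidableRel G.Adj]
    (hconn : G.Connected) (hn : 2 ≤ Fintype.card V) :
    (bDR G : ℤ) ≤ (G.maxDegree : ℤ) + G.minDegree - 1 := by
  have : Nontrivial V := Fintype.one_lt_card_iff_nontrivial.mp hn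
  obtain ⟨v, hv⟩ := G.exists_minimal_degree_vertex
  obtain ⟨u, hvu⟩ := hconn.preconnected.exists_adj_of_nontrivial v
  have hbdr := bDR_add_one_le_degree_add_degree hvu
  have hdu := G.degree_le_maxDegree u
  omega
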